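/- arXiv:2510.27652 — 4 statements merged into one kernel-verified Lean document; each statement's English description precedes it below -/
import Mathlib

section
/- Let 𝒢 be a commutative generalized group, i.e. a·b = b·a for all a, b ∈ 𝒢. Then 𝒢 is a group: the identity map a ↦ e(a) is constant, so that e(a) = e(b) for all a, b ∈ 𝒢 and this common element is a two-sided identity for all of 𝒢. -/
/-- A generalized group: a nonempty set with an associative multiplication such that each
element `a` has a unique identity `e a` with `a * e a = e a * a = a`, and each element `a`
has an inverse `inv a` with `a * inv a = inv a * a = e a`. -/
structure GeneralizedGroup (G : Type*) where
  nonempty : Nonempty G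
  mul : G → G → G
  e : G → G
  inv : G → G
  mul_assoc : ∀ a b c : G, mul (mul a b) c = mul a (mul b c)
  mul_e : ∀ a : G, mul a (e a) = a
  e_mul : ∀ a : G, mul (e a) a = a
  e_unique : ∀ a x : G, mul a x = a → mul x a = a → x = e a
  mul_inv : ∀ a : G, mul a (inv a) = e a
  inv_mul : ∀ a : G, mul (inv a) a = e a

/-- A commutative generalized group is a group: the identity map `a ↦ e(a)` is constant,
and this common element is a two-sided identity for all elements. -/
theorem genGroup_comm_is_group {G : Type*} (𝒢 : GeneralizedGroup G)
    (hcomm : ∀ a b : G, 𝒢.mul a b = 𝒢.mul b a) :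
    (∀ a b : G, 𝒢.e a = 𝒢.e b) ∧
    (∀ a b : G, 𝒢.mul (𝒢.e a) b = b ∧ 𝒢.mul b (𝒢.e a) = b) := by
  have key : ∀ a b : G, 𝒢.e a = 𝒢.e (𝒢.mul a b) := by
    intro a b
    apply 𝒢.e_unique
    · calc 𝒢.mul (𝒢.mul a b) (𝒢.e a)
          = 𝒢.mul a (𝒢.mul b (𝒢.e a)) := 𝒢.mul_assoc ..
        _ = 𝒢.mul a (𝒢.mul (𝒢.e a) b) := by rw [hcomm b]
        _ = 𝒢.mul (𝒢.mul a (𝒢.e a)) b := (𝒢.mul_assoc ..).symm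
        _ = 𝒢.mul a b := by rw [𝒢.mul_e]
    · calc 𝒢.mul (𝒢.e a) (𝒢.mul a b)
          = 𝒢.mul (𝒢.mul (𝒢.e a) a) b := (𝒢.mul_assoc ..).symm
        _ = 𝒢.mul a b := by rw [𝒢.e_mul]
  have const : ∀ a b : G, 𝒢.e a = 𝒢.e b := by
    intro a b
    rw [key a b, key b a, hcomm a b]
  refine ⟨const, fun a b => ?_⟩
  rw [const a b]
  exact ⟨𝒢.e_mul b, 𝒢.mul_e b⟩
end

section
/- Let 𝒢 be a generalized group and a ∈ 𝒢. Then the set 𝒢ₐ = { x ∈ 𝒢 | e(x) = e(a) } is a generalized subgroup of 𝒢, i.e. 𝒢ₐ is nonempty and x·y⁻¹ ∈ 𝒢ₐ for all x, y ∈ 𝒢ₐ. -/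
/-- A nonempty subset `H` of a generalized group is a generalized subgroup if
`a · b⁻¹ ∈ H` for all `a, b ∈ H`. -/
def IsGenSubgroup {G : Type*} (𝒢 : GeneralizedGroup G) (H : Set G) : Prop :=
  H.Nonempty ∧ ∀ a ∈ H, ∀ b ∈ H, 𝒢.mul a (𝒢.inv b) ∈ H

lemma e_e {G : Type*} (𝒢 : GeneralizedGroup G) (y : G) : 𝒢.e (𝒢.e y) = 𝒢.e y := by
  have h : 𝒢.mul (𝒢.e y) (𝒢.e y) = 𝒢.e y := by
    exact 𝒢.e_unique y (𝒢.mul (𝒢.e y) (𝒢.e y))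
      (by rw [← 𝒢.mul_assoc, 𝒢.mul_e, 𝒢.mul_e])
      (by rw [𝒢.mul_assoc, 𝒢.e_mul, 𝒢.e_mul])
  exact (𝒢.e_unique (𝒢.e y) (𝒢.e y) h h).symm

lemma e_inv {G : Type*} (𝒢 : GeneralizedGroup G) (y : G) : 𝒢.e (𝒢.inv y) = 𝒢.e y := by
  set f := 𝒢.e (𝒢.inv y) with hf
  have h1 : 𝒢.mul (𝒢.e y) f = 𝒢.e y := by
    rw [← 𝒢.mul_inv y, 𝒢.mul_assoc, 𝒢.mul_e]
  have h2 : 𝒢.mul f (𝒢.e y) = 𝒢.e y := by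
    rw [← 𝒢.inv_mul y, ← 𝒢.mul_assoc, 𝒢.e_mul]
  have := 𝒢.e_unique (𝒢.e y) f h1 h2
  rw [this, e_e]

/-- For `a` in a generalized group `𝒢`, the set `𝒢ₐ = { x | e(x) = e(a) }` is a
generalized subgroup of `𝒢`. -/
theorem genSubgroup_fiber {G : Type*} (𝒢 : GeneralizedGroup G) (a : G) :
    IsGenSubgroup 𝒢 { x : G | 𝒢.e x = 𝒢.e a } := by
  constructor
  · exact ⟨a, rfl⟩
  · intro x hx y hy
    simp only [Set.mem_setOf_eq] at *
    have hinv : 𝒢.mul (𝒢.inv y) (𝒢.e a) = 𝒢.inv y := by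
      rw [← hy, ← e_inv, 𝒢.mul_e]
    have h1 : 𝒢.mul (𝒢.mul x (𝒢.inv y)) (𝒢.e a) = 𝒢.mul x (𝒢.inv y) := by
      rw [𝒢.mul_assoc, hinv]
    have h2 : 𝒢.mul (𝒢.e a) (𝒢.mul x (𝒢.inv y)) = 𝒢.mul x (𝒢.inv y) := by
      rw [← 𝒢.mul_assoc, ← hx, 𝒢.e_mul]
    exact (𝒢.e_unique _ _ h1 h2).symm
end

section
/- Let 𝒢 be a generalized group and a ∈ 𝒢. Then the set 𝒢ₐ = { x ∈ 𝒢 | e(x) = e(a) } is a group under the restricted multiplication: 𝒢ₐ is closed under multiplication and inversion, e(a) ∈ 𝒢ₐ, e(a) is a two-sided identity for every element of 𝒢ₐ, and x·x⁻¹ = x⁻¹·x = e(a) for every x ∈ 𝒢ₐ. -/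
/-- For `a` in a generalized group `𝒢`, the set `𝒢ₐ = { x | e(x) = e(a) }` is a group
under the restricted multiplication: it is closed under multiplication and inversion,
contains `e(a)`, `e(a)` is a two-sided identity on it, and `x·x⁻¹ = x⁻¹·x = e(a)`
for every `x` in it. -/
theorem genGroup_fiber_is_group {G : Type*} (𝒢 : GeneralizedGroup G) (a : G) :
    (∀ x ∈ { x : G | 𝒢.e x = 𝒢.e a }, ∀ y ∈ { x : G | 𝒢.e x = 𝒢.e a },
        𝒢.mul x y ∈ { x : G | 𝒢.e x = 𝒢.e a }) ∧
    (∀ x ∈ { x : G | 𝒢.e x = 𝒢.e a }, 𝒢.inv x ∈ { x : G | 𝒢.e x = 𝒢.e a }) ∧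
    𝒢.e a ∈ { x : G | 𝒢.e x = 𝒢.e a } ∧
    (∀ x ∈ { x : G | 𝒢.e x = 𝒢.e a }, 𝒢.mul (𝒢.e a) x = x ∧ 𝒢.mul x (𝒢.e a) = x) ∧
    (∀ x ∈ { x : G | 𝒢.e x = 𝒢.e a },
        𝒢.mul x (𝒢.inv x) = 𝒢.e a ∧ 𝒢.mul (𝒢.inv x) x = 𝒢.e a) := by
  have eE : ∀ b : G, 𝒢.e (𝒢.e b) = 𝒢.e b := by
    intro b
    have hsq : 𝒢.mul (𝒢.e b) (𝒢.e b) = 𝒢.e b := by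
      nth_rewrite 1 [← 𝒢.inv_mul b]
      rw [𝒢.mul_assoc, 𝒢.mul_e, 𝒢.inv_mul]
    exact (𝒢.e_unique (𝒢.e b) (𝒢.e b) hsq hsq).symm
  have eInv : ∀ b : G, 𝒢.e (𝒢.inv b) = 𝒢.e b := by
    intro b
    set c := 𝒢.inv b with hc
    -- e c * e b = e b
    have h1 : 𝒢.mul (𝒢.e c) (𝒢.e b) = 𝒢.e b := by
      rw [← 𝒢.inv_mul b, ← hc, ← 𝒢.mul_assoc, 𝒢.e_mul]
    -- e b * e c = e b
    have h2 : 𝒢.mul (𝒢.e b) (𝒢.e c) = 𝒢.e b := by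
      rw [← 𝒢.mul_inv b, ← hc, 𝒢.mul_assoc, 𝒢.mul_e]
    have h3 : 𝒢.mul b (𝒢.e c) = b := by
      conv_lhs => rw [← 𝒢.mul_e b]
      rw [𝒢.mul_assoc, h2, 𝒢.mul_e]
    have h4 : 𝒢.mul (𝒢.e c) b = b := by
      conv_lhs => rw [← 𝒢.e_mul b]
      rw [← 𝒢.mul_assoc, h1, 𝒢.e_mul]
    have := 𝒢.e_unique b (𝒢.e c) h3 h4
    exact this
  refine ⟨?_, ?_, ?_, ?_, ?_⟩
  · intro x hx y hy
    simp only [Set.mem_setOf_eq] at *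
    have h1 : 𝒢.mul (𝒢.mul x y) (𝒢.e a) = 𝒢.mul x y := by
      rw [𝒢.mul_assoc, ← hy, 𝒢.mul_e]
    have h2 : 𝒢.mul (𝒢.e a) (𝒢.mul x y) = 𝒢.mul x y := by
      rw [← 𝒢.mul_assoc, ← hx, 𝒢.e_mul]
    exact (𝒢.e_unique (𝒢.mul x y) (𝒢.e a) h1 h2).symm
  · intro x hx
    simp only [Set.mem_setOf_eq] at *
    rw [eInv, hx]
  · exact eE a
  · intro x hx
    simp only [Set.mem_setOf_eq] at hx
    exact ⟨by rw [← hx, 𝒢.e_mul], by rw [← hx, 𝒢.mul_e]⟩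
  · intro x hx
    simp only [Set.mem_setOf_eq] at hx
    exact ⟨by rw [𝒢.mul_inv, hx], by rw [𝒢.inv_mul, hx]⟩
end

section
/- Let f : 𝒢 → 𝒢′ be a generalized group homomorphism between generalized groups 𝒢 and 𝒢′. If H′ is a generalized subgroup of 𝒢′ and the preimage f⁻¹(H′) is nonempty, then f⁻¹(H′) is a generalized subgroup of 𝒢. -/
namespace GeneralizedGroup

variable {G : Type*} (𝒢 : GeneralizedGroup G)

lemma e_idem (c : G) : 𝒢.mul (𝒢.e c) (𝒢.e c) = 𝒢.e c := by
  apply 𝒢.e_unique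
  · rw [← 𝒢.mul_assoc, 𝒢.mul_e, 𝒢.mul_e]
  · rw [𝒢.mul_assoc, 𝒢.e_mul, 𝒢.e_mul]

/-- If `d` is an inverse of `c`, then `e d = e c`. -/
lemma e_of_inv {c d : G} (h1 : 𝒢.mul c d = 𝒢.e c) (h2 : 𝒢.mul d c = 𝒢.e c) :
    𝒢.e d = 𝒢.e c := by
  have comm : 𝒢.mul d (𝒢.e c) = 𝒢.mul (𝒢.e c) d := by
    rw [← h1, ← 𝒢.mul_assoc, h2, h1]
  have hec : 𝒢.e c = 𝒢.e (𝒢.mul (𝒢.e c) d) := by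
    apply 𝒢.e_unique
    · rw [𝒢.mul_assoc, comm, ← 𝒢.mul_assoc, 𝒢.e_idem]
    · rw [← 𝒢.mul_assoc, 𝒢.e_idem]
  have hed : 𝒢.e d = 𝒢.e (𝒢.mul (𝒢.e c) d) := by
    apply 𝒢.e_unique
    · rw [𝒢.mul_assoc, 𝒢.mul_e]
    · rw [← comm, ← 𝒢.mul_assoc, 𝒢.e_mul]
  exact hed.trans hec.symm

/-- Inverses are unique in a generalized group. -/
lemma inv_unique {c d : G} (h1 : 𝒢.mul c d = 𝒢.e c) (h2 : 𝒢.mul d c = 𝒢.e c) :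
    d = 𝒢.inv c := by
  have hd : 𝒢.e d = 𝒢.e c := 𝒢.e_of_inv h1 h2
  have hi : 𝒢.e (𝒢.inv c) = 𝒢.e c := 𝒢.e_of_inv (𝒢.mul_inv c) (𝒢.inv_mul c)
  calc d = 𝒢.mul (𝒢.e d) d := (𝒢.e_mul d).symm
    _ = 𝒢.mul (𝒢.mul (𝒢.inv c) c) d := by rw [hd, 𝒢.inv_mul]
    _ = 𝒢.mul (𝒢.inv c) (𝒢.mul c d) := 𝒢.mul_assoc _ _ _
    _ = 𝒢.mul (𝒢.inv c) (𝒢.e (𝒢.inv c)) := by rw [h1, hi]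
    _ = 𝒢.inv c := 𝒢.mul_e _

end GeneralizedGroup

/-- The nonempty preimage of a generalized subgroup under a generalized group
homomorphism is a generalized subgroup. -/
theorem genGroupHom_preimage_subgroup {G G' : Type*} (𝒢 : GeneralizedGroup G)
    (𝒢' : GeneralizedGroup G') (f : G → G')
    (hf : ∀ a b : G, f (𝒢.mul a b) = 𝒢'.mul (f a) (f b))
    (H' : Set G') (hH' : IsGenSubgroup 𝒢' H') (hne : (f ⁻¹' H').Nonempty) :
    IsGenSubgroup 𝒢 (f ⁻¹' H') := by
  have he : ∀ a : G, f (𝒢.e a) = 𝒢'.e (f a) := by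
    intro a
    apply 𝒢'.e_unique
    · rw [← hf, 𝒢.mul_e]
    · rw [← hf, 𝒢.e_mul]
  have hinv : ∀ a : G, f (𝒢.inv a) = 𝒢'.inv (f a) := by
    intro a
    apply 𝒢'.inv_unique
    · rw [← hf, 𝒢.mul_inv, he]
    · rw [← hf, 𝒢.inv_mul, he]
  refine ⟨hne, fun a ha b hb => ?_⟩
  simp only [Set.mem_preimage] at *
  rw [hf, hinv]
  exact hH'.2 _ ha _ hb
end
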